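/- arXiv:1904.01263 — 4 statements merged into one kernel-verified Lean document; each statement's English description precedes it below -/
import Mathlib

section
/- For the Erdős–Rényi random graph G(n,p) with q = 1-p, the probability p_n that G(n,p) is connected satisfies the recursion p_n = 1 - Σ_{k=1}^{n-1} C(n-1, k) q^{k(n-k)} p_{n-k} for all n ≥ 1, with p_1 = 1. -/
open Classical Finset

noncomputable section

/-- Probability that `G(n,p)` equals a given graph `g`. -/
def graphProb {n : ℕ} (p : ℝ) (g : SimpleGraph (Fin n)) : ℝ :=
  p ^ g.edgeSet.ncard * (1 - p) ^ (n.choose 2 - g.edgeSet.ncard)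

/-- Probability that `G(n,p)` satisfies the predicate `P`. -/
def probEvent (n : ℕ) (p : ℝ) (P : SimpleGraph (Fin n) → Prop) : ℝ :=
  ∑ g : SimpleGraph (Fin n), if P g then graphProb p g else 0

/-- Number of connected components. -/
def numComp {n : ℕ} (g : SimpleGraph (Fin n)) : ℕ := Nat.card g.ConnectedComponent

/-- Probability that `G(n,p)` is connected. -/
def connProb (n : ℕ) (p : ℝ) : ℝ := probEvent n p (fun g => g.Connected)

/-- `E[(ν_n - 1)^{\underline s}]`. -/
def Efall (n : ℕ) (p : ℝ) (s : ℕ) : ℝ :=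
  ∑ g : SimpleGraph (Fin n), ((numComp g - 1).descFactorial s : ℝ) * graphProb p g

/-- `E[(ν_n)^{\underline s}]`. -/
def EfallNu (n : ℕ) (p : ℝ) (s : ℕ) : ℝ :=
  ∑ g : SimpleGraph (Fin n), ((numComp g).descFactorial s : ℝ) * graphProb p g

/-- Probability that `G(n,p)` has an isolated vertex. -/
def isolProb (n : ℕ) (p : ℝ) : ℝ :=
  probEvent n p (fun g => ∃ v, ∀ w, ¬ g.Adj v w)


/-!
Fix a vertex `v` and condition on the vertex set `S` of its connected component. This event says
exactly that `G` induces a connected graph on `S` and has none of the `|S| (n - |S|)` edges between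
`S` and its complement, while `G` on the complement is arbitrary; since edges are independent, it has
probability `q ^ (|S| (n - |S|)) * p_{|S|}`. Summing over the sets `S ∋ v`, grouped by
`k = n - |S|`, gives `1 = ∑_{k < n} C(n-1, k) q ^ (k (n - k)) p_{n-k}`, whose `k = 0` term is `p_n`.
For `n = 1` the remaining sum is empty, so `p_1 = 1`.
-/

lemma Nat.add_choose_two (a b : ℕ) : (a + b).choose 2 = a.choose 2 + a * b + b.choose 2 := by
  rw [Nat.add_choose_eq, Finset.Nat.sum_antidiagonal_succ, Finset.Nat.sum_antidiagonal_succ,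
    Finset.Nat.antidiagonal_zero, Finset.sum_singleton]
  simp only [Nat.choose_zero_right, Nat.choose_one_right, zero_add]
  ring

namespace SimpleGraph

variable {V W α β : Type*}

def gnpProb (p : ℝ) (G : SimpleGraph V) : ℝ :=
  p ^ G.edgeSet.ncard * (1 - p) ^ ((Nat.card V).choose 2 - G.edgeSet.ncard)

/- `DecidableEq V` is a binder rather than left to `Classical`, so that sums over graphs on a
subtype of `V` agree with this definition on the decidability instance. -/
def gnpConnProb (V : Type*) [Fintype V] [DecidableEq V] (p : ℝ) : ℝ :=
  ∑ G : SimpleGraph V, if G.Connected then gnpProb p G else 0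

lemma graphProb_eq_gnpProb {n : ℕ} (p : ℝ) (G : SimpleGraph (Fin n)) :
    graphProb p G = gnpProb p G := by
  simp [graphProb, gnpProb]

lemma connProb_eq_gnpConnProb (n : ℕ) (p : ℝ) : connProb n p = gnpConnProb (Fin n) p := by
  simp only [connProb, probEvent, gnpConnProb, graphProb_eq_gnpProb]

lemma gnpProb_eq_of_iso {G : SimpleGraph V} {H : SimpleGraph W} (e : G ≃g H) (p : ℝ) :
    gnpProb p G = gnpProb p H := by
  rw [gnpProb, gnpProb, ← Nat.card_coe_set_eq, ← Nat.card_coe_set_eq,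
    Nat.card_congr e.mapEdgeSet, Nat.card_congr e.toEquiv]

lemma gnpConnProb_congr [Fintype V] [DecidableEq V] [Fintype W] [DecidableEq W] (e : V ≃ W)
    (p : ℝ) : gnpConnProb V p = gnpConnProb W p := by
  refine Fintype.sum_equiv e.simpleGraph _ _ fun G => ?_
  have iso : e.simpleGraph G ≃g G := Iso.comap e.symm G
  simp only [iso.connected_iff, gnpProb_eq_of_iso iso]

lemma gnpConnProb_eq_connProb [Fintype V] [DecidableEq V] (p : ℝ) :
    gnpConnProb V p = connProb (Nat.card V) p := by
  rw [connProb_eq_gnpConnProb, Nat.card_eq_fintype_card]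
  exact gnpConnProb_congr (Fintype.equivFin V) p

lemma sum_gnpProb [Fintype V] [DecidableEq V] (p : ℝ) :
    ∑ G : SimpleGraph V, gnpProb p G = 1 := by
  have h := Finset.sum_pow_mul_eq_add_pow p (1 - p) (⊤ : SimpleGraph V).edgeFinset
  rw [add_sub_cancel, one_pow] at h
  rw [← h]
  refine Finset.sum_bij (fun G _ => G.edgeFinset) (fun G _ => ?_)
    (fun G _ H _ => edgeFinset_inj.mp) (fun t ht => ?_) (fun G _ => ?_)
  · exact Finset.mem_powerset.mpr (edgeFinset_mono le_top)
  · refine ⟨fromEdgeSet t, Finset.mem_univ _, ?_⟩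
    have ht' : Disjoint (t : Set (Sym2 V)) Sym2.diagSet := by
      rw [Finset.mem_powerset, ← Finset.coe_subset, coe_edgeFinset, edgeSet_top] at ht
      exact Set.subset_compl_iff_disjoint_right.mp ht
    rw [← Finset.coe_inj, coe_edgeFinset, edgeSet_fromEdgeSet, sdiff_eq_left.mpr ht']
  · rw [gnpProb, card_edgeFinset_top_eq_card_choose_two, ← Nat.card_eq_fintype_card,
      ← coe_edgeFinset, Set.ncard_coe_finset]

lemma edgeSet_ncard_le_choose_two [Fintype V] (G : SimpleGraph V) :
    G.edgeSet.ncard ≤ (Nat.card V).choose 2 := by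
  rw [← coe_edgeFinset, Set.ncard_coe_finset, Nat.card_eq_fintype_card]
  exact card_edgeFinset_le_card_choose_two

lemma edgeSet_ncard_sum [Finite α] [Finite β] (G : SimpleGraph α) (H : SimpleGraph β) :
    (G ⊕g H).edgeSet.ncard = G.edgeSet.ncard + H.edgeSet.ncard := by
  rw [← Nat.card_coe_set_eq, Nat.card_congr edgeSetSumEquiv, Nat.card_sum]
  rfl

lemma gnpProb_sum [Fintype α] [Fintype β] (p : ℝ) (G : SimpleGraph α) (H : SimpleGraph β) :
    gnpProb p (G ⊕g H) =
      (1 - p) ^ (Nat.card α * Nat.card β) * (gnpProb p G * gnpProb p H) := by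
  have hG := edgeSet_ncard_le_choose_two G
  have hH := edgeSet_ncard_le_choose_two H
  have hexp : (Nat.card (α ⊕ β)).choose 2 - (G.edgeSet.ncard + H.edgeSet.ncard) =
      ((Nat.card α).choose 2 - G.edgeSet.ncard) + Nat.card α * Nat.card β +
        ((Nat.card β).choose 2 - H.edgeSet.ncard) := by
    rw [Nat.card_sum, Nat.add_choose_two]
    omega
  rw [gnpProb, gnpProb, gnpProb, edgeSet_ncard_sum, hexp, pow_add, pow_add, pow_add]
  ring

lemma Reachable.mem_of_adj_closed {G : SimpleGraph V} {S : Set V} {u v : V}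
    (h : G.Reachable u v) (hu : u ∈ S) (hS : ∀ a ∈ S, ∀ b, G.Adj a b → b ∈ S) : v ∈ S := by
  replace h := (reachable_iff_reflTransGen u v).mp h
  induction h with
  | refl => exact hu
  | tail _ hab ih => exact hS _ ih _ hab

lemma supp_connectedComponentMk_eq_iff {G : SimpleGraph V} {S : Set V} {v : V} (hv : v ∈ S) :
    (G.connectedComponentMk v).supp = S ↔
      (G.induce S).Connected ∧ ∀ a ∈ S, ∀ b, G.Adj a b → b ∈ S := by
  constructor
  · rintro rfl
    exact ⟨(ConnectedComponent.maximal_connected_induce_supp _).1,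
      fun a ha b hab => (ConnectedComponent.mem_supp_congr_adj _ hab).mp ha⟩
  · rintro ⟨hconn, hS⟩
    ext x
    rw [ConnectedComponent.mem_supp_iff, ConnectedComponent.eq]
    refine ⟨fun h => h.symm.mem_of_adj_closed hv hS, fun hx => ?_⟩
    exact (hconn.preconnected ⟨x, hx⟩ ⟨v, hv⟩).map (Embedding.induce S).toHom

section SumCompl

variable {S : Set V} [DecidablePred (· ∈ S)]

def sumCompl (G₁ : SimpleGraph S) (G₂ : SimpleGraph ↥Sᶜ) : SimpleGraph V :=
  (Equiv.Set.sumCompl S).simpleGraph (G₁ ⊕g G₂)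

variable (G₁ : SimpleGraph S) (G₂ : SimpleGraph ↥Sᶜ)

@[simp]
lemma induce_sumCompl_left : (sumCompl G₁ G₂).induce S = G₁ := by
  ext a b
  simp [sumCompl, Equiv.Set.sumCompl_symm_apply_of_mem]

@[simp]
lemma induce_sumCompl_right : (sumCompl G₁ G₂).induce Sᶜ = G₂ := by
  ext a b
  simp [sumCompl]

lemma not_adj_sumCompl {a b : V} (ha : a ∈ S) (hb : b ∉ S) : ¬ (sumCompl G₁ G₂).Adj a b := by
  simp [sumCompl, Equiv.Set.sumCompl_symm_apply_of_mem ha,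
    Equiv.Set.sumCompl_symm_apply_of_notMem hb]

lemma sumCompl_induce {G : SimpleGraph V} (hS : ∀ a ∈ S, ∀ b, G.Adj a b → b ∈ S) :
    sumCompl (G.induce S) (G.induce Sᶜ) = G := by
  ext a b
  by_cases ha : a ∈ S <;> by_cases hb : b ∈ S
  · simp [sumCompl, Equiv.Set.sumCompl_symm_apply_of_mem, ha, hb]
  · exact iff_of_false (not_adj_sumCompl _ _ ha hb) fun hab => hb (hS a ha b hab)
  · exact iff_of_false (fun hab => not_adj_sumCompl _ _ hb ha hab.symm)
      fun hab => ha (hS b hb a hab.symm)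
  · simp [sumCompl, Equiv.Set.sumCompl_symm_apply_of_notMem, ha, hb]

lemma gnpProb_sumCompl [Fintype V] (p : ℝ) :
    gnpProb p (sumCompl G₁ G₂) =
      (1 - p) ^ (Nat.card S * Nat.card ↥Sᶜ) * (gnpProb p G₁ * gnpProb p G₂) := by
  have e : sumCompl G₁ G₂ ≃g G₁ ⊕g G₂ := Iso.comap (Equiv.Set.sumCompl S).symm _
  rw [gnpProb_eq_of_iso e, gnpProb_sum]

end SumCompl

section Fintype

variable [Fintype V] [DecidableEq V]

lemma sum_gnpProb_supp_eq {S : Set V} [DecidablePred (· ∈ S)] {v : V} (hv : v ∈ S) (p : ℝ) :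
    ∑ G : SimpleGraph V, (if (G.connectedComponentMk v).supp = S then gnpProb p G else 0) =
      (1 - p) ^ (Nat.card S * Nat.card ↥Sᶜ) * gnpConnProb S p := by
  have supp_sumCompl : ∀ (G₁ : SimpleGraph S) (G₂ : SimpleGraph ↥Sᶜ),
      ((sumCompl G₁ G₂).connectedComponentMk v).supp = S ↔ G₁.Connected := by
    intro G₁ G₂
    rw [supp_connectedComponentMk_eq_iff hv, induce_sumCompl_left]
    exact and_iff_left fun a ha b hab => by_contra fun hb => not_adj_sumCompl G₁ G₂ ha hb hab
  have sumCompl_injective : Function.Injective fun GG : SimpleGraph S × SimpleGraph ↥Sᶜ =>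
      sumCompl GG.1 GG.2 := fun GG HH h =>
    Prod.ext (by simpa using congrArg (induce S) h) (by simpa using congrArg (induce Sᶜ) h)
  calc ∑ G : SimpleGraph V, (if (G.connectedComponentMk v).supp = S then gnpProb p G else 0)
      = ∑ GG : SimpleGraph S × SimpleGraph ↥Sᶜ,
          if GG.1.Connected then gnpProb p (sumCompl GG.1 GG.2) else 0 := by
        refine (Fintype.sum_of_injective _ sumCompl_injective _ _ (fun G hG => ?_)
          fun GG => by simp only [supp_sumCompl]).symm
        refine if_neg fun hsupp => hG ⟨(G.induce S, G.induce Sᶜ), ?_⟩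
        exact sumCompl_induce ((supp_connectedComponentMk_eq_iff hv).mp hsupp).2
    _ = (1 - p) ^ (Nat.card S * Nat.card ↥Sᶜ) * gnpConnProb S p := by
        rw [Fintype.sum_prod_type, gnpConnProb, Finset.mul_sum]
        refine Finset.sum_congr rfl fun G₁ _ => ?_
        split_ifs
        · simp only [gnpProb_sumCompl, ← Finset.mul_sum, sum_gnpProb, mul_one]
        · simp

lemma sum_range_choose_mul_connProb (v : V) (p : ℝ) :
    ∑ k ∈ range (Nat.card V), ((Nat.card V - 1).choose k : ℝ) *
      (1 - p) ^ (k * (Nat.card V - k)) * connProb (Nat.card V - k) p = 1 := by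
  have : Nonempty V := ⟨v⟩
  set N := Nat.card V
  have card_compl (T : Finset V) : Nat.card ↥(T : Set V)ᶜ = N - #T := by
    rw [Nat.card_coe_set_eq, Set.ncard_compl, Set.ncard_coe_finset]
  have compl_supp_subset : ∀ G ∈ (univ : Finset (SimpleGraph V)),
      ((G.connectedComponentMk v).supp)ᶜ.toFinset ∈ (univ.erase v).powerset := by
    intro G _
    simp only [Finset.mem_powerset, Finset.subset_iff, Set.mem_toFinset, Finset.mem_erase]
    exact fun x hx => ⟨fun hxv => hx (hxv ▸ rfl), mem_univ x⟩
  calc ∑ k ∈ range N, ((N - 1).choose k : ℝ) * (1 - p) ^ (k * (N - k)) * connProb (N - k) p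
      = ∑ T ∈ (univ.erase v).powerset, (1 - p) ^ (#T * (N - #T)) * connProb (N - #T) p := by
        rw [Finset.sum_powerset_apply_card fun k => (1 - p) ^ (k * (N - k)) * connProb (N - k) p,
          Finset.card_erase_of_mem (mem_univ v), Finset.card_univ,
          ← Nat.card_eq_fintype_card, Nat.sub_add_cancel Nat.card_pos]
        simp only [nsmul_eq_mul, mul_assoc, N]
    _ = ∑ T ∈ (univ.erase v).powerset, ∑ G : SimpleGraph V,
          if (G.connectedComponentMk v).supp = (T : Set V)ᶜ then gnpProb p G else 0 := by
        refine Finset.sum_congr rfl fun T hT => ?_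
        have hv : v ∈ (T : Set V)ᶜ := by simpa [Finset.subset_iff] using hT
        rw [sum_gnpProb_supp_eq hv, gnpConnProb_eq_connProb, card_compl, compl_compl,
          Nat.card_coe_set_eq, Set.ncard_coe_finset, mul_comm #T]
    _ = ∑ G : SimpleGraph V, gnpProb p G := by
        rw [← Finset.sum_fiberwise_of_maps_to compl_supp_subset]
        refine Finset.sum_congr rfl fun T _ => ?_
        rw [Finset.sum_filter]
        refine Finset.sum_congr rfl fun G _ => ?_
        simp only [← Finset.coe_inj, Set.coe_toFinset, compl_eq_comm, eq_comm (a := (T : Set V)ᶜ)]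
    _ = 1 := sum_gnpProb p

end Fintype

end SimpleGraph

lemma connProb_eq_one_sub_sum (p : ℝ) {n : ℕ} (hn : 1 ≤ n) :
    connProb n p =
      1 - ∑ k ∈ Icc 1 (n - 1), (n - 1).choose k * (1 - p) ^ (k * (n - k)) * connProb (n - k) p := by
  obtain ⟨m, rfl⟩ : ∃ m, n = m + 1 := ⟨n - 1, by omega⟩
  have h := SimpleGraph.sum_range_choose_mul_connProb (0 : Fin (m + 1)) p
  rw [Nat.card_fin, range_eq_Ico, sum_eq_sum_Ico_succ_bot (Nat.succ_pos m), zero_add,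
    Nat.succ_eq_add_one, Ico_add_one_right_eq_Icc] at h
  simp only [Nat.add_sub_cancel, Nat.choose_zero_right, Nat.cast_one, zero_mul, pow_zero,
    Nat.sub_zero, one_mul] at h ⊢
  linarith

theorem connProb_recursion_general (p : ℝ) (n : ℕ) (hn : 1 ≤ n) :
    connProb n p =
      1 - ∑ k ∈ Finset.Icc 1 (n - 1),
        (n - 1).choose k * (1 - p) ^ (k * (n - k)) * connProb (n - k) p ∧
    connProb 1 p = 1 :=
  ⟨connProb_eq_one_sub_sum p hn, by simpa using connProb_eq_one_sub_sum p le_rfl⟩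

theorem connProb_recursion (p : ℝ) (hp0 : 0 ≤ p) (hp1 : p ≤ 1) (n : ℕ) (hn : 1 ≤ n) :
    connProb n p =
      1 - ∑ k ∈ Finset.Icc 1 (n - 1),
        (n - 1).choose k * (1 - p) ^ (k * (n - k)) * connProb (n - k) p ∧
    connProb 1 p = 1 :=
  connProb_recursion_general p n hn
end
end

section
/- Let ν_n be the number of connected components of G(n,p). For n ≥ s > 1, P(ν_n = s) = Σ_{k=s-1}^{n-1} C(n-1, k) P(ν_k = s-1) p_{n-k} q^{k(n-k)}, where p_m is the probability that G(m,p) is connected and q = 1-p. -/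
open Classical Finset

noncomputable section

/-!
Fix a vertex `v`. Sort the graphs with `s` components by the set `S` of vertices outside the
component of `v`. For `|S| = k` these graphs are exactly the disjoint unions of a graph on `S` with
`s - 1` components and a connected graph on the complement of `S`, and the probability of such a
union factors as `P(g₁) P(g₂) q^{k(n-k)}`, the last factor accounting for the absent edges between
the two parts. Summing over the `C(n-1, k)` choices of `S` gives the recursion.
-/

namespace SimpleGraph

variable {V α β : Type*} {G : SimpleGraph α} {H : SimpleGraph β}

lemma sum_reachable_inl_iff {a a' : α} :
    (G ⊕g H).Reachable (.inl a) (.inl a') ↔ G.Reachable a a' := by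
  refine ⟨fun h => ?_, fun h => h.map Embedding.sumInl.toHom⟩
  rw [reachable_iff_reflTransGen] at h ⊢
  -- collapsing `β` to the point `a` turns a walk in the sum into a walk in `G`
  refine h.lift' (Sum.elim id fun _ => a) ?_
  rintro (x | x) (y | y) hxy
  · exact .single (by simpa using hxy)
  · simp at hxy
  · simp at hxy
  · exact .refl

lemma sum_reachable_inr_iff {b b' : β} :
    (G ⊕g H).Reachable (.inr b) (.inr b') ↔ H.Reachable b b' :=
  (Iso.reachable_iff (φ := Iso.sumComm)).symm.trans sum_reachable_inl_iff

lemma card_connectedComponent_sum [Finite α] [Finite β] :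
    Nat.card (G ⊕g H).ConnectedComponent =
      Nat.card G.ConnectedComponent + Nat.card H.ConnectedComponent := by
  rw [← Nat.card_sum]
  symm
  refine Nat.card_eq_of_bijective (Sum.elim (ConnectedComponent.map Embedding.sumInl.toHom)
    (ConnectedComponent.map Embedding.sumInr.toHom)) ⟨?_, ?_⟩
  · rintro (c | c) (d | d) h <;>
      induction c using ConnectedComponent.ind <;> induction d using ConnectedComponent.ind <;>
      simp only [Sum.elim_inl, Sum.elim_inr, ConnectedComponent.map_mk,
        ConnectedComponent.eq] at h
    · simpa using sum_reachable_inl_iff.mp h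
    · exact (not_reachable_sum_inl_inr _ _ h).elim
    · exact (not_reachable_sum_inl_inr _ _ h.symm).elim
    · simpa using sum_reachable_inr_iff.mp h
  · refine ConnectedComponent.ind ?_
    rintro (a | b)
    · exact ⟨.inl (G.connectedComponentMk a), rfl⟩
    · exact ⟨.inr (H.connectedComponentMk b), rfl⟩

lemma ncard_edgeSet_sum [Finite α] [Finite β] :
    (G ⊕g H).edgeSet.ncard = G.edgeSet.ncard + H.edgeSet.ncard := by
  simp only [← Nat.card_coe_set_eq, Nat.card_congr edgeSetSumEquiv, Nat.card_sum]

lemma card_connectedComponent_eq_one_iff {G : SimpleGraph V} :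
    Nat.card G.ConnectedComponent = 1 ↔ G.Connected := by
  rw [Nat.card_eq_one_iff_unique, connected_iff]
  refine and_congr ⟨fun _ u v => ConnectedComponent.exact (Subsingleton.elim _ _),
    Preconnected.subsingleton_connectedComponent⟩
    ⟨fun ⟨c⟩ => ⟨c.out⟩, fun ⟨v⟩ => ⟨G.connectedComponentMk v⟩⟩

lemma ncard_edgeSet_le_choose_two [Fintype V] (G : SimpleGraph V) :
    G.edgeSet.ncard ≤ (Fintype.card V).choose 2 := by
  simpa [← coe_edgeFinset, Set.ncard_coe_finset] using G.card_edgeFinset_le_card_choose_two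

def glue (e : V ≃ α ⊕ β) (gh : SimpleGraph α × SimpleGraph β) : SimpleGraph V :=
  (gh.1 ⊕g gh.2).comap e

variable (e : V ≃ α ⊕ β)

lemma glue_injective : Function.Injective (glue e) := by
  rintro ⟨g₁, g₂⟩ ⟨h₁, h₂⟩ h
  have hsum : g₁ ⊕g g₂ = h₁ ⊕g h₂ := e.simpleGraph.symm.injective h
  refine Prod.ext (SimpleGraph.ext ?_) (SimpleGraph.ext ?_) <;> funext u v
  · simpa using congrArg (fun G => G.Adj (.inl u) (.inl v)) hsum
  · simpa using congrArg (fun G => G.Adj (.inr u) (.inr v)) hsum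

lemma exists_glue_eq (G : SimpleGraph V)
    (h : ∀ x y, G.Adj x y → ((e x).isRight ↔ (e y).isRight)) :
    ∃ gh, glue e gh = G := by
  refine ⟨(G.comap (e.symm ∘ .inl), G.comap (e.symm ∘ .inr)), ?_⟩
  ext x y
  obtain ⟨u, rfl⟩ := e.symm.surjective x
  obtain ⟨v, rfl⟩ := e.symm.surjective y
  have huv := h (e.symm u) (e.symm v)
  rcases u with a | b <;> rcases v with a' | b' <;> simp_all [glue]

lemma glue_reachable_iff (gh : SimpleGraph α × SimpleGraph β) (x y : V) :
    (glue e gh).Reachable x y ↔ (gh.1 ⊕g gh.2).Reachable (e x) (e y) :=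
  (Iso.reachable_iff (φ := Iso.comap e _)).symm

lemma card_connectedComponent_glue [Finite α] [Finite β] (gh : SimpleGraph α × SimpleGraph β) :
    Nat.card (glue e gh).ConnectedComponent =
      Nat.card gh.1.ConnectedComponent + Nat.card gh.2.ConnectedComponent :=
  (Nat.card_congr (Iso.comap e _).connectedComponentEquiv).trans card_connectedComponent_sum

lemma ncard_edgeSet_glue [Finite α] [Finite β] (gh : SimpleGraph α × SimpleGraph β) :
    (glue e gh).edgeSet.ncard = gh.1.edgeSet.ncard + gh.2.edgeSet.ncard := by
  rw [← ncard_edgeSet_sum, ← Nat.card_coe_set_eq, ← Nat.card_coe_set_eq,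
    ← Nat.card_congr (Iso.comap e (gh.1 ⊕g gh.2)).mapEdgeSet]
  rfl

lemma glue_reachable_iff_isRight_iff_connected (gh : SimpleGraph α × SimpleGraph β) {v : V}
    {w : β} (hv : e v = .inr w) :
    (∀ x, (glue e gh).Reachable v x ↔ (e x).isRight) ↔ gh.2.Connected := by
  simp only [glue_reachable_iff, hv]
  refine ⟨fun h => (connected_iff_exists_forall_reachable _).2 ⟨w, fun w' => ?_⟩, fun h x => ?_⟩
  · simpa [sum_reachable_inr_iff] using h (e.symm (.inr w'))
  · rcases e x with a | b
    · simpa using fun hr => not_reachable_sum_inl_inr a w hr.symm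
    · simpa [sum_reachable_inr_iff] using h.preconnected w b

end SimpleGraph

open SimpleGraph

lemma Nat.add_choose_two_s5 (k m : ℕ) : (k + m).choose 2 = k.choose 2 + m.choose 2 + k * m := by
  apply Nat.cast_injective (R := ℚ)
  push_cast [Nat.cast_choose_two]
  ring

section Glue

variable {n k m : ℕ} (e : Fin n ≃ Fin k ⊕ Fin m) (gh : SimpleGraph (Fin k) × SimpleGraph (Fin m))

lemma numComp_glue : numComp (glue e gh) = numComp gh.1 + numComp gh.2 :=
  card_connectedComponent_glue e gh

lemma graphProb_glue (p : ℝ) :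
    graphProb p (glue e gh) = graphProb p gh.1 * graphProb p gh.2 * (1 - p) ^ (k * m) := by
  have hn : n = k + m := by simpa using Fintype.card_congr e
  have h₁ : gh.1.edgeSet.ncard ≤ k.choose 2 := by simpa using gh.1.ncard_edgeSet_le_choose_two
  have h₂ : gh.2.edgeSet.ncard ≤ m.choose 2 := by simpa using gh.2.ncard_edgeSet_le_choose_two
  simp only [graphProb, ncard_edgeSet_glue, hn, Nat.add_choose_two_s5]
  rw [show k.choose 2 + m.choose 2 + k * m - (gh.1.edgeSet.ncard + gh.2.edgeSet.ncard) =
    (k.choose 2 - gh.1.edgeSet.ncard) + (m.choose 2 - gh.2.edgeSet.ncard) + k * m by omega]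
  ring

end Glue

lemma numComp_le {n : ℕ} (g : SimpleGraph (Fin n)) : numComp g ≤ n := by
  simpa [numComp, Nat.card_eq_fintype_card] using
    Nat.card_le_card_of_surjective g.connectedComponentMk Quot.mk_surjective

lemma numComp_eq_one_iff {n : ℕ} (g : SimpleGraph (Fin n)) : numComp g = 1 ↔ g.Connected :=
  card_connectedComponent_eq_one_iff

section probEvent

variable {n : ℕ} {p : ℝ}

lemma probEvent_congr {P Q : SimpleGraph (Fin n) → Prop} (h : ∀ g, P g ↔ Q g) :
    probEvent n p P = probEvent n p Q :=
  congrArg (probEvent n p) (funext fun g => propext (h g))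

lemma probEvent_eq_zero {P : SimpleGraph (Fin n) → Prop} (h : ∀ g, ¬ P g) :
    probEvent n p P = 0 :=
  Finset.sum_eq_zero fun g _ => if_neg (h g)

lemma probEvent_eq_sum_fiberwise {ι : Type*} (P : SimpleGraph (Fin n) → Prop)
    (f : SimpleGraph (Fin n) → ι) (t : Finset ι) (hf : ∀ g, f g ∈ t) :
    probEvent n p P = ∑ i ∈ t, probEvent n p (fun g => P g ∧ f g = i) := by
  rw [probEvent, ← Finset.sum_fiberwise_of_maps_to (fun g _ => hf g)]
  refine Finset.sum_congr rfl fun i _ => ?_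
  rw [probEvent, Finset.sum_filter]
  exact Finset.sum_congr rfl fun g _ => by by_cases f g = i <;> simp_all

end probEvent

theorem probEvent_numComp_succ_and_reachable_iff {n k m : ℕ} (p : ℝ) (s : ℕ)
    (e : Fin n ≃ Fin k ⊕ Fin m) {v : Fin n} {w : Fin m} (hv : e v = .inr w) :
    probEvent n p (fun g => numComp g = s + 1 ∧ ∀ x, g.Reachable v x ↔ (e x).isRight) =
      probEvent k p (fun g => numComp g = s) * connProb m p * (1 - p) ^ (k * m) := by
  rw [connProb, probEvent, probEvent, probEvent, Finset.sum_mul_sum, ← Fintype.sum_prod_type',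
    Finset.sum_mul]
  symm
  apply Fintype.sum_of_injective (glue e) (glue_injective e)
  · intro g hg
    refine if_neg ?_
    rintro ⟨-, hreach⟩
    -- the component of `v` being the right part, no edge of `g` crosses `e`
    refine hg (exists_glue_eq e g fun x y hxy => ?_)
    rw [← hreach, ← hreach]
    exact ⟨fun h => h.trans hxy.reachable, fun h => h.trans hxy.symm.reachable⟩
  · intro gh
    rw [numComp_glue, glue_reachable_iff_isRight_iff_connected e gh hv, graphProb_glue,
      ← numComp_eq_one_iff]
    by_cases h₂ : numComp gh.2 = 1 <;> simp [h₂]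

lemma exists_equiv_sum_fin {n : ℕ} (S : Finset (Fin n)) :
    ∃ e : Fin n ≃ Fin #S ⊕ Fin (n - #S), ∀ x, (e x).isRight ↔ x ∉ S := by
  have hcard : Fintype.card {x // x ∉ S} = n - #S := by simp [Fintype.card_subtype_compl]
  refine ⟨(Equiv.sumCompl (· ∈ S)).symm.trans
    (Equiv.sumCongr S.equivFin (Fintype.equivFinOfCardEq hcard)), fun x => ?_⟩
  by_cases hx : x ∈ S <;>
    simp [hx, Equiv.sumCompl_symm_apply_of_pos, Equiv.sumCompl_symm_apply_of_neg]

theorem probEvent_numComp_succ_and_unreachable_eq {n : ℕ} (p : ℝ) (s : ℕ) {v : Fin n}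
    {S : Finset (Fin n)} (hv : v ∉ S) :
    probEvent n p (fun g => numComp g = s + 1 ∧ ({x | ¬ g.Reachable v x} : Finset _) = S) =
      probEvent #S p (fun g => numComp g = s) * connProb (n - #S) p *
        (1 - p) ^ (#S * (n - #S)) := by
  obtain ⟨e, he⟩ := exists_equiv_sum_fin S
  obtain ⟨w, hw⟩ : ∃ w, e v = .inr w := Sum.isRight_iff.mp ((he v).2 hv)
  rw [← probEvent_numComp_succ_and_reachable_iff p s e hw]
  refine probEvent_congr fun g => and_congr_right' ?_
  simp only [Finset.ext_iff, Finset.mem_filter, Finset.mem_univ, true_and, he]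
  exact forall_congr' fun x => by tauto

theorem numComp_recursion_general (p : ℝ) (n s : ℕ)
    (hs : 1 < s) (hsn : s ≤ n) :
    probEvent n p (fun g => numComp g = s) =
      ∑ k ∈ Finset.Icc (s - 1) (n - 1),
        (n - 1).choose k * probEvent k p (fun g => numComp g = s - 1) *
          connProb (n - k) p * (1 - p) ^ (k * (n - k)) := by
  obtain ⟨t, rfl⟩ : ∃ t, s = t + 1 := ⟨s - 1, by omega⟩
  let v : Fin n := ⟨0, by omega⟩
  let F k := probEvent k p (fun g => numComp g = t) * connProb (n - k) p * (1 - p) ^ (k * (n - k))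
  have hF : ∀ k < t, F k = 0 := fun k hk => by
    simp only [F, probEvent_eq_zero fun g (h : numComp g = t) => (numComp_le g).not_gt (h ▸ hk),
      zero_mul]
  calc probEvent n p (fun g => numComp g = t + 1)
      = ∑ S ∈ (univ.erase v).powerset,
          probEvent n p (fun g => numComp g = t + 1 ∧ ({x | ¬ g.Reachable v x} : Finset _) = S) :=
        probEvent_eq_sum_fiberwise _ _ _ fun g => mem_powerset.2 fun x hx =>
          mem_erase.2 ⟨by rintro rfl; simp at hx, mem_univ x⟩
    _ = ∑ S ∈ (univ.erase v).powerset, F #S :=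
        sum_congr rfl fun S hS => probEvent_numComp_succ_and_unreachable_eq p t
          fun hvS => by simpa using mem_powerset.1 hS hvS
    _ = ∑ k ∈ range n, (n - 1).choose k * F k := by
        rw [sum_powerset_apply_card, card_erase_of_mem (mem_univ v), card_univ, Fintype.card_fin,
          Nat.sub_add_cancel (by omega)]
        simp only [nsmul_eq_mul]
    _ = _ := by
        rw [Nat.add_sub_cancel]
        refine (sum_subset (fun k hk => ?_) fun k hk hk' => ?_).symm.trans
          (sum_congr rfl fun k _ => by simp only [F, mul_assoc])
        · simp only [mem_Icc, mem_range] at hk ⊢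
          omega
        · simp only [mem_range, mem_Icc, not_and, not_le] at hk hk'
          rw [hF k (by omega), mul_zero]

theorem numComp_recursion (p : ℝ) (hp0 : 0 ≤ p) (hp1 : p ≤ 1) (n s : ℕ)
    (hs : 1 < s) (hsn : s ≤ n) :
    probEvent n p (fun g => numComp g = s) =
      ∑ k ∈ Finset.Icc (s - 1) (n - 1),
        (n - 1).choose k * probEvent k p (fun g => numComp g = s - 1) *
          connProb (n - k) p * (1 - p) ^ (k * (n - k)) :=
  numComp_recursion_general p n s hs hsn
end
end

section
/- The connectivity probability of the Erdős–Rényi random graph satisfies p_{n+1} ≥ (1 - q^n) p_n for all n ≥ 0, where q = 1-p. -/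
open Classical Finset

noncomputable section

/-!
A graph on `Fin (n + 1)` is the same as a graph `h` on `Fin n` together with the neighbourhood
`S ⊆ Fin n` of the last vertex, and the `G(n + 1, p)`-probability of the pair factors as the
`G(n, p)`-probability of `h` times `p ^ #S * q ^ (n - #S)`. If `h` is connected and `S` is
nonempty, the graph is connected, and the total weight of the nonempty `S` is `1 - q ^ n`.
-/

lemma SimpleGraph.ncard_edgeSet_le_choose_two_s6 {V : Type*} [Fintype V] (G : SimpleGraph V) :
    G.edgeSet.ncard ≤ (Fintype.card V).choose 2 := by
  rw [← G.coe_edgeFinset, Set.ncard_coe_finset]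
  exact G.card_edgeFinset_le_card_choose_two

lemma Fintype.sum_nonempty_pow_mul_eq {α R : Type*} [Fintype α] [CommRing R] (a : R) :
    ∑ S : Finset α with S.Nonempty, a ^ #S * (1 - a) ^ (Fintype.card α - #S) =
      1 - (1 - a) ^ Fintype.card α := by
  have total := Fintype.sum_pow_mul_eq_add_pow α a (1 - a)
  rw [add_sub_cancel, one_pow, ← Finset.sum_filter_add_sum_filter_not _ Finset.Nonempty] at total
  simp only [not_nonempty_iff_eq_empty, filter_eq', mem_univ, ↓reduceIte, sum_singleton,
    Finset.card_empty, pow_zero, tsub_zero, one_mul] at total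
  exact eq_sub_of_add_eq total

section AttachVertex

variable {n : ℕ}

def attachVertex (h : SimpleGraph (Fin n)) (S : Finset (Fin n)) : SimpleGraph (Fin (n + 1)) :=
  h.map Fin.castSuccEmb ⊔
    SimpleGraph.fromEdgeSet ((fun b : Fin n => s(Fin.last n, b.castSucc)) '' S)

lemma attachVertex_adj_castSucc (h : SimpleGraph (Fin n)) (S : Finset (Fin n)) (a b : Fin n) :
    (attachVertex h S).Adj a.castSucc b.castSucc ↔ h.Adj a b := by
  simp [attachVertex, -Fin.coe_castSuccEmb, Fin.castSuccEmb_apply, (Fin.castSucc_ne_last _).symm]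

lemma attachVertex_last_adj_castSucc (h : SimpleGraph (Fin n)) (S : Finset (Fin n)) (b : Fin n) :
    (attachVertex h S).Adj (Fin.last n) b.castSucc ↔ b ∈ S := by
  simp [attachVertex, -Fin.coe_castSuccEmb, Fin.castSuccEmb_apply, (Fin.castSucc_ne_last _).symm]

lemma ncard_edgeSet_attachVertex (h : SimpleGraph (Fin n)) (S : Finset (Fin n)) :
    (attachVertex h S).edgeSet.ncard = h.edgeSet.ncard + #S := by
  set star := fun b : Fin n => s(Fin.last n, b.castSucc)
  have star_inj : Function.Injective star := fun a b hab => by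
    simpa [star, (Fin.castSucc_ne_last _).symm] using hab
  have star_not_diag : Disjoint (star '' S) Sym2.diagSet := by
    rw [Set.disjoint_left]
    rintro _ ⟨b, -, rfl⟩
    simpa [star] using (Fin.castSucc_ne_last b).symm
  have old_disj_star : Disjoint (Fin.castSuccEmb.sym2Map '' h.edgeSet) (star '' S) := by
    rw [Set.disjoint_left]
    rintro _ ⟨e, -, rfl⟩ ⟨b, -, he⟩
    induction e with
    | _ u v => simp [star, (Fin.castSucc_ne_last _).symm] at he
  rw [attachVertex, SimpleGraph.edgeSet_sup, SimpleGraph.edgeSet_map,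
    SimpleGraph.edgeSet_fromEdgeSet, sdiff_eq_left.2 star_not_diag,
    Set.ncard_union_eq old_disj_star (Set.toFinite _) (Set.toFinite _),
    Set.ncard_image_of_injective _ Fin.castSuccEmb.sym2Map.injective,
    Set.ncard_image_of_injective _ star_inj, Set.ncard_coe_finset]

lemma attachVertex_injective :
    Function.Injective (Function.uncurry (attachVertex (n := n))) := by
  rintro ⟨h₁, S₁⟩ ⟨h₂, S₂⟩ he
  simp only [Function.uncurry_apply_pair] at he
  refine Prod.ext ?_ ?_
  · ext a b
    rw [← attachVertex_adj_castSucc h₁ S₁, ← attachVertex_adj_castSucc h₂ S₂, he]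
  · ext b
    rw [← attachVertex_last_adj_castSucc h₁ S₁, ← attachVertex_last_adj_castSucc h₂ S₂, he]

lemma connected_attachVertex {h : SimpleGraph (Fin n)} {S : Finset (Fin n)}
    (hh : h.Connected) (hS : S.Nonempty) : (attachVertex h S).Connected := by
  obtain ⟨s, hs⟩ := hS
  let castSuccHom : h →g attachVertex h S :=
    ⟨Fin.castSucc, (attachVertex_adj_castSucc h S _ _).2⟩
  have reach_last (v : Fin (n + 1)) : (attachVertex h S).Reachable v (Fin.last n) := by
    induction v using Fin.lastCases with
    | last => rfl
    | cast a =>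
      exact ((hh.preconnected a s).map castSuccHom).trans
        ((attachVertex_last_adj_castSucc h S s).2 hs).symm.reachable
  exact ⟨fun v w => (reach_last v).trans (reach_last w).symm⟩

lemma graphProb_attachVertex (p : ℝ) (h : SimpleGraph (Fin n)) (S : Finset (Fin n)) :
    graphProb p (attachVertex h S) = graphProb p h * (p ^ #S * (1 - p) ^ (n - #S)) := by
  have choose_succ : (n + 1).choose 2 = n.choose 2 + n := by
    rw [Nat.choose_succ_succ, Nat.choose_one_right, add_comm]
  have h_le := h.ncard_edgeSet_le_choose_two_s6
  have S_le : #S ≤ n := by simpa using S.card_le_univ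
  rw [Fintype.card_fin] at h_le
  have missing : (n + 1).choose 2 - (h.edgeSet.ncard + #S) =
      (n.choose 2 - h.edgeSet.ncard) + (n - #S) := by omega
  rw [graphProb, graphProb, ncard_edgeSet_attachVertex, missing, pow_add, pow_add]
  ring

lemma graphProb_nonneg {p : ℝ} (hp0 : 0 ≤ p) (hp1 : p ≤ 1) (g : SimpleGraph (Fin n)) :
    0 ≤ graphProb p g :=
  mul_nonneg (pow_nonneg hp0 _) (pow_nonneg (sub_nonneg.2 hp1) _)

end AttachVertex

lemma connProb_eq_sum_filter (n : ℕ) (p : ℝ) :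
    connProb n p = ∑ g : SimpleGraph (Fin n) with g.Connected, graphProb p g := by
  rw [connProb, probEvent, Finset.sum_filter]
  congr!

theorem connProb_succ_ge (p : ℝ) (hp0 : 0 ≤ p) (hp1 : p ≤ 1) (n : ℕ) :
    connProb (n + 1) p ≥ (1 - (1 - p) ^ n) * connProb n p := by
  set D := ({h : SimpleGraph (Fin n) | h.Connected} : Finset _) ×ˢ
    ({S : Finset (Fin n) | S.Nonempty} : Finset _)
  have weight := Fintype.sum_nonempty_pow_mul_eq (α := Fin n) p
  rw [Fintype.card_fin] at weight
  calc (1 - (1 - p) ^ n) * connProb n p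
      = ∑ hS ∈ D, graphProb p (attachVertex hS.1 hS.2) := by
        rw [connProb_eq_sum_filter, Finset.mul_sum, Finset.sum_product]
        refine Finset.sum_congr rfl fun h _ => ?_
        simp only [graphProb_attachVertex, ← Finset.mul_sum, weight, mul_comm]
    _ = ∑ g ∈ D.image (Function.uncurry attachVertex), graphProb p g :=
        (Finset.sum_image fun _ _ _ _ he => attachVertex_injective he).symm
    _ ≤ ∑ g : SimpleGraph (Fin (n + 1)) with g.Connected, graphProb p g := by
        refine Finset.sum_le_sum_of_subset_of_nonneg ?_ fun g _ _ => graphProb_nonneg hp0 hp1 g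
        intro g hg
        obtain ⟨⟨h, S⟩, hD, rfl⟩ := Finset.mem_image.1 hg
        simp only [D, Finset.mem_product, Finset.mem_filter_univ] at hD
        exact Finset.mem_filter_univ _ |>.2 (connected_attachVertex hD.1 hD.2)
    _ = connProb (n + 1) p := (connProb_eq_sum_filter _ _).symm
end
end

section
/- Fix n and let p → 0. Then P(ν_n = s) = F_{s,n} p^{n-s} + O(p^{n-s+1}) for each s ≤ n, where F_{s,n} is the number of labeled forests on n vertices with exactly s trees. In particular, p_n = n^{n-2} p^{n-1} + O(p^n). -/
open Classical Finset

noncomputable section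

open Filter Topology Asymptotics

/-- Number of labeled forests on `n` vertices with exactly `s` tree components. -/
def forestCount (s n : ℕ) : ℕ :=
  Nat.card {g : SimpleGraph (Fin n) // g.IsAcyclic ∧ numComp g = s}

/-!
Summing over graphs, `P(ν_n = s)` is a polynomial in `p` with one term
`p ^ e(g) * (1 - p) ^ (N - e(g))` per graph `g` with `s` components. Every graph satisfies
`n ≤ e(g) + ν(g)`, with equality exactly for forests: adding the edges of a forest one at a time,
each joins two different components. Hence all terms are divisible by `p ^ (n - s)`, and the
terms of exact order `p ^ (n - s)` come from the `F_{s,n}` forests.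

For connectivity the forests are the spanning trees. Rooting them at a vertex `r`, a tree is the
same as its parent map (the parent of `v` is its neighbour closer to `r`), and the Prüfer code —
repeatedly delete a leaf and record its parent — is a bijection from parent maps to words of
length `n - 2`, which gives Cayley's count `n ^ (n - 2)`.
-/

theorem probEvent_sub_isBigO {n : ℕ} (P : SimpleGraph (Fin n) → Prop) (k : ℕ)
    (hk : ∀ g, P g → k ≤ g.edgeSet.ncard) :
    (fun p : ℝ => probEvent n p P -
        (Nat.card {g : SimpleGraph (Fin n) // P g ∧ g.edgeSet.ncard = k} : ℝ) * p ^ k)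
      =O[𝓝 0] fun p : ℝ => p ^ (k + 1) := by
  set Q : ℝ → ℝ := fun p => ∑ g ∈ univ.filter P,
    p ^ (g.edgeSet.ncard - k) * (1 - p) ^ (n.choose 2 - g.edgeSet.ncard)
  have hfactor (p : ℝ) : probEvent n p P = p ^ k * Q p := by
    rw [probEvent, ← Finset.sum_filter, Finset.mul_sum]
    refine Finset.sum_congr rfl fun g hg => ?_
    rw [graphProb, ← mul_assoc, ← pow_add, Nat.add_sub_cancel' (hk g (Finset.mem_filter.mp hg).2)]
  have hQ0 : Q 0 = Nat.card {g : SimpleGraph (Fin n) // P g ∧ g.edgeSet.ncard = k} := by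
    rw [Nat.card_eq_fintype_card, Fintype.card_subtype, ← Finset.filter_filter,
      Finset.natCast_card_filter]
    refine Finset.sum_congr rfl fun g hg => ?_
    have := hk g (Finset.mem_filter.mp hg).2
    by_cases h : g.edgeSet.ncard = k
    · simp [h]
    · simp [h, zero_pow (show g.edgeSet.ncard - k ≠ 0 by omega)]
  have hQ : (fun p => Q p - Q 0) =O[𝓝 0] fun p => p := by
    simpa using (show DifferentiableAt ℝ Q 0 by fun_prop).isBigO_sub
  have key := (isBigO_refl (fun p : ℝ => p ^ k) (𝓝 0)).mul hQ
  simp only [← pow_succ] at key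
  refine key.congr_left fun p => ?_
  rw [hfactor, hQ0]
  ring

namespace SimpleGraph

variable {V : Type*} {G : SimpleGraph V} {u v x y : V}

theorem Reachable.eq_of_forall_adj {β : Sort*} {f : V → β} (hf : ∀ a b, G.Adj a b → f a = f b)
    (h : G.Reachable x y) : f x = f y := by
  obtain ⟨p⟩ := h
  induction p with
  | nil => rfl
  | cons ha _ ih => exact (hf _ _ ha).trans ih

/-- The component of `x` in `G ⊔ edge u v`, as a component of `G`, when `u` and `v` lie in
different components of `G`. -/
def mergeEdge (G : SimpleGraph V) (u v x : V) : G.ConnectedComponent :=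
  Function.update id (G.connectedComponentMk v) (G.connectedComponentMk u)
    (G.connectedComponentMk x)

theorem reachable_sup_edge_iff (huv : ¬G.Reachable u v) :
    (G ⊔ edge u v).Reachable x y ↔ G.mergeEdge u v x = G.mergeEdge u v y := by
  have hne : G.connectedComponentMk u ≠ G.connectedComponentMk v :=
    fun h => huv (ConnectedComponent.exact h)
  have hu : G.mergeEdge u v u = G.connectedComponentMk u := Function.update_of_ne hne _ _
  have hv : G.mergeEdge u v v = G.connectedComponentMk u := Function.update_self _ _ _
  constructor
  · refine Reachable.eq_of_forall_adj fun a b hab => ?_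
    rcases hab with hab | hab
    · rw [mergeEdge, mergeEdge, ConnectedComponent.connectedComponentMk_eq_of_adj hab]
    · rw [edge_adj] at hab
      rcases hab.1 with ⟨rfl, rfl⟩ | ⟨rfl, rfl⟩ <;> rw [hu, hv]
  · have huv' : (G ⊔ edge u v).Reachable u v :=
      Adj.reachable (Or.inr ((edge_adj u v u v).mpr ⟨by tauto, by rintro rfl; exact huv .rfl⟩))
    have hmono {a b : V} (h : G.connectedComponentMk a = G.connectedComponentMk b) :
        (G ⊔ edge u v).Reachable a b := (ConnectedComponent.exact h).mono le_sup_left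
    intro h
    by_cases hx : G.connectedComponentMk x = G.connectedComponentMk v <;>
      by_cases hy : G.connectedComponentMk y = G.connectedComponentMk v <;>
      simp only [mergeEdge, hx, hy, Function.update_self, Function.update_of_ne, ne_eq,
        not_false_eq_true, id] at h
    · exact hmono (hx.trans hy.symm)
    · exact (hmono hx).trans (huv'.symm.trans (hmono h))
    · exact (hmono h).trans (huv'.trans (hmono hy).symm)
    · exact hmono h

theorem range_mergeEdge (huv : ¬G.Reachable u v) :
    Set.range (G.mergeEdge u v) = {G.connectedComponentMk v}ᶜ := by
  have hne : G.connectedComponentMk u ≠ G.connectedComponentMk v :=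
    fun h => huv (ConnectedComponent.exact h)
  ext c
  induction c using ConnectedComponent.ind with | h x => ?_
  rw [Set.mem_compl_singleton_iff]
  constructor
  · rintro ⟨y, hy⟩
    by_cases hyv : G.connectedComponentMk y = G.connectedComponentMk v
    · rw [mergeEdge, hyv, Function.update_self] at hy
      exact hy ▸ hne
    · rw [mergeEdge, Function.update_of_ne hyv] at hy
      exact hy ▸ hyv
  · exact fun hx => ⟨x, Function.update_of_ne hx _ _⟩

theorem card_connectedComponent_sup_edge [Finite V] (huv : ¬G.Reachable u v) :
    Nat.card (G ⊔ edge u v).ConnectedComponent + 1 = Nat.card G.ConnectedComponent := by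
  have hcard : Nat.card (G ⊔ edge u v).ConnectedComponent =
      Nat.card (Set.range (G.mergeEdge u v)) :=
    Nat.card_congr ((Quot.congrRight fun _ _ => reachable_sup_edge_iff huv).trans
      (Setoid.quotientKerEquivRange _))
  rw [hcard, range_mergeEdge huv, Nat.card_coe_set_eq,
    ← Set.ncard_singleton (G.connectedComponentMk v), Set.ncard_compl_add_ncard]

theorem Connected.exists_adj_dist_add_one (hG : G.Connected) {r : V} (hv : v ≠ r) :
    ∃ w, G.Adj v w ∧ G.dist w r + 1 = G.dist v r := by
  obtain ⟨p, hp⟩ := hG.exists_walk_length_eq_dist v r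
  cases p with
  | nil => exact absurd rfl hv
  | @cons _ w _ hadj q =>
    refine ⟨w, hadj, le_antisymm ?_ ?_⟩
    · rw [← hp, Walk.length_cons]
      exact Nat.add_le_add_right (dist_le q) 1
    · obtain ⟨q', hq'⟩ := hG.exists_walk_length_eq_dist w r
      rw [← hq']
      exact dist_le (Walk.cons hadj q')

theorem card_connectedComponent_bot :
    Nat.card (⊥ : SimpleGraph V).ConnectedComponent = Nat.card V :=
  (Nat.card_eq_of_bijective _
    ⟨fun _ _ h => reachable_bot.mp (ConnectedComponent.exact h), fun c => c.exists_rep⟩).symm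

theorem IsAcyclic.card_edgeSet_add_card_connectedComponent [Finite V] (hG : G.IsAcyclic) :
    Nat.card G.edgeSet + Nat.card G.ConnectedComponent = Nat.card V := by
  induction h : Nat.card G.edgeSet generalizing G with
  | zero =>
    rw [Nat.card_coe_set_eq, Set.ncard_eq_zero, edgeSet_eq_empty] at h
    rw [h, card_connectedComponent_bot, zero_add]
  | succ m ih =>
    obtain ⟨e, he⟩ : G.edgeSet.Nonempty := by
      rw [← Set.ncard_pos, ← Nat.card_coe_set_eq, h]
      exact m.succ_pos
    induction e with | h u v => ?_
    set H := G.deleteEdges {s(u, v)}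
    have hHG : H ⊔ edge u v = G := by
      rw [show H = G \ edge u v by rw [← deleteEdges_edgeSet, edgeSet_edge_of_ne (G.ne_of_adj he)]]
      exact sdiff_sup_cancel ((edge_le_iff G).mpr (Or.inr he))
    have hcardH : Nat.card H.edgeSet = m := by
      rw [Nat.card_coe_set_eq, edgeSet_deleteEdges, Set.ncard_sdiff_singleton_of_mem he,
        ← Nat.card_coe_set_eq, h, Nat.add_sub_cancel]
    have hbridge : ¬H.Reachable u v := isBridge_iff.mp (isAcyclic_iff_forall_isBridge.mp hG he)
    have hmerge := card_connectedComponent_sup_edge hbridge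
    rw [hHG] at hmerge
    have := ih (G := H) (hG.anti (deleteEdges_le _)) hcardH
    omega

theorem exists_isAcyclic_card_connectedComponent_eq :
    ∃ F ≤ G, F.IsAcyclic ∧ Nat.card F.ConnectedComponent = Nat.card G.ConnectedComponent := by
  obtain ⟨F, hFG, hF, hreach⟩ := G.exists_isAcyclic_reachable_eq_le
  exact ⟨F, hFG, hF, Nat.card_congr (Quot.congrRight fun _ _ => by rw [hreach])⟩

theorem card_le_card_edgeSet_add_card_connectedComponent [Finite V] (G : SimpleGraph V) :
    Nat.card V ≤ Nat.card G.edgeSet + Nat.card G.ConnectedComponent := by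
  obtain ⟨F, hFG, hF, hcard⟩ := G.exists_isAcyclic_card_connectedComponent_eq
  rw [← hF.card_edgeSet_add_card_connectedComponent, hcard, Nat.card_coe_set_eq,
    Nat.card_coe_set_eq]
  exact Nat.add_le_add_right (Set.ncard_le_ncard (edgeSet_mono hFG)) _

theorem isAcyclic_iff_card_edgeSet_add_card_connectedComponent [Finite V] :
    G.IsAcyclic ↔ Nat.card G.edgeSet + Nat.card G.ConnectedComponent = Nat.card V := by
  refine ⟨IsAcyclic.card_edgeSet_add_card_connectedComponent, fun h => by_contra fun hG => ?_⟩
  obtain ⟨F, hFG, hF, hcard⟩ := G.exists_isAcyclic_card_connectedComponent_eq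
  have hlt : Nat.card F.edgeSet < Nat.card G.edgeSet := by
    rw [Nat.card_coe_set_eq, Nat.card_coe_set_eq]
    exact Set.ncard_lt_ncard (edgeSet_strict_mono (hFG.lt_of_ne (by rintro rfl; exact hG hF)))
  have := hF.card_edgeSet_add_card_connectedComponent
  omega

end SimpleGraph

section ParentMap

variable {V : Type*} {s : Finset V} {r ℓ a v : V} {f g : V → V} {c c' : List V}

/-- `f` is the parent map of a tree on `insert r s` rooted at `r`. -/
structure IsParentMap (s : Finset V) (r : V) (f : V → V) : Prop where
  root_notMem : r ∉ s
  apply_of_notMem : ∀ v ∉ s, f v = v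
  exists_iterate_eq_root : ∀ v ∈ s, ∃ k, f^[k] v = r

namespace IsParentMap

theorem apply_root (hf : IsParentMap s r f) : f r = r :=
  hf.apply_of_notMem r hf.root_notMem

theorem apply_ne (hf : IsParentMap s r f) (hv : v ∈ s) : f v ≠ v := by
  intro hfix
  obtain ⟨k, hk⟩ := hf.exists_iterate_eq_root v hv
  rw [Function.iterate_fixed hfix] at hk
  exact hf.root_notMem (hk ▸ hv)

theorem apply_apply_ne (hf : IsParentMap s r f) (hv : v ∈ s) : f (f v) ≠ v := by
  intro h2
  have hcycle (k : ℕ) : f^[k] v = v ∨ f^[k] v = f v := by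
    induction k with
    | zero => exact Or.inl rfl
    | succ k ih =>
      rw [Function.iterate_succ_apply']
      rcases ih with h | h <;> rw [h] <;> simp [h2]
  obtain ⟨k, hk⟩ := hf.exists_iterate_eq_root v hv
  rcases hcycle k with h | h <;> rw [hk] at h
  · exact hf.root_notMem (h ▸ hv)
  · rw [← h, hf.apply_root] at h2
    exact hf.root_notMem (h2 ▸ hv)

end IsParentMap

def pickOr (r : V) (t : Finset V) : V :=
  if h : t.Nonempty then h.choose else r

theorem pickOr_mem {t : Finset V} (h : t.Nonempty) : pickOr r t ∈ t := by
  rw [pickOr, dif_pos h]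
  exact h.choose_spec

variable [DecidableEq V]

theorem IsParentMap.apply_mem (hf : IsParentMap s r f) (hv : v ∈ s) : f v ∈ insert r s := by
  by_contra hfv
  rw [Finset.mem_insert, not_or] at hfv
  obtain ⟨k, hk⟩ := hf.exists_iterate_eq_root v hv
  cases k with
  | zero => exact hf.root_notMem (hk ▸ hv)
  | succ k =>
    rw [Function.iterate_succ_apply, Function.iterate_fixed (hf.apply_of_notMem _ hfv.2)] at hk
    exact hfv.1 hk

theorem IsParentMap.iterate_mem (hf : IsParentMap s r f) (hv : v ∈ insert r s) (k : ℕ) :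
    f^[k] v ∈ insert r s := by
  induction k with
  | zero => exact hv
  | succ k ih =>
    rw [Function.iterate_succ_apply']
    rcases Finset.mem_insert.mp ih with h | h
    · rw [h, hf.apply_root]
      exact Finset.mem_insert_self r s
    · exact hf.apply_mem h

def leaves (s : Finset V) (f : V → V) : Finset V :=
  s.filter fun v => ∀ u ∈ s, f u ≠ v

theorem mem_leaves : v ∈ leaves s f ↔ v ∈ s ∧ ∀ u ∈ s, f u ≠ v :=
  Finset.mem_filter

theorem leaves_update (hℓ : ℓ ∈ s) (haℓ : a ≠ ℓ) (hg : ∀ u ∈ s.erase ℓ, g u ≠ ℓ) :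
    leaves s (Function.update g ℓ a) = insert ℓ (leaves (s.erase ℓ) g \ {a}) := by
  ext v
  simp only [mem_leaves, Finset.mem_insert, Finset.mem_sdiff, Finset.mem_singleton,
    Finset.mem_erase]
  by_cases hvℓ : v = ℓ
  · subst hvℓ
    refine iff_of_true ⟨hℓ, fun u hu => ?_⟩ (Or.inl rfl)
    by_cases huℓ : u = v
    · rwa [huℓ, Function.update_self]
    · rw [Function.update_of_ne huℓ]
      exact hg u (Finset.mem_erase.mpr ⟨huℓ, hu⟩)
  · constructor
    · rintro ⟨hv, hleaf⟩
      refine Or.inr ⟨⟨⟨hvℓ, hv⟩, fun u ⟨huℓ, hu⟩ => ?_⟩, fun hva => ?_⟩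
      · simpa [Function.update_of_ne huℓ] using hleaf u hu
      · simpa [hva] using hleaf ℓ hℓ
    · rintro (rfl | ⟨⟨⟨-, hv⟩, hleaf⟩, hva⟩)
      · exact absurd rfl hvℓ
      refine ⟨hv, fun u hu => ?_⟩
      by_cases huℓ : u = ℓ
      · rw [huℓ, Function.update_self]; exact Ne.symm hva
      · rw [Function.update_of_ne huℓ]; exact hleaf u ⟨huℓ, hu⟩

theorem iterate_update_of_forall_ne (h : ∀ j, g^[j] v ≠ ℓ) (k : ℕ) :
    (Function.update g ℓ a)^[k] v = g^[k] v := by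
  induction k with
  | zero => rfl
  | succ k ih => rw [Function.iterate_succ_apply', Function.iterate_succ_apply', ih,
      Function.update_of_ne (h k)]

namespace IsParentMap

theorem erase_leaf (hf : IsParentMap s r f) (hℓ : ℓ ∈ leaves s f) :
    IsParentMap (s.erase ℓ) r (Function.update f ℓ ℓ) := by
  obtain ⟨hℓs, hleaf⟩ := mem_leaves.mp hℓ
  refine ⟨fun h => hf.root_notMem (Finset.mem_of_mem_erase h), fun v hv => ?_, fun v hv => ?_⟩
  · by_cases hvℓ : v = ℓ
    · rw [hvℓ, Function.update_self]
    · rw [Function.update_of_ne hvℓ]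
      exact hf.apply_of_notMem v fun h => hv (Finset.mem_erase.mpr ⟨hvℓ, h⟩)
  · obtain ⟨hvℓ, hvs⟩ := Finset.mem_erase.mp hv
    obtain ⟨k, hk⟩ := hf.exists_iterate_eq_root v hvs
    refine ⟨k, ?_⟩
    rw [iterate_update_of_forall_ne (fun j => ?_), hk]
    cases j with
    | zero => exact hvℓ
    | succ j =>
      rw [Function.iterate_succ_apply']
      rcases Finset.mem_insert.mp (hf.iterate_mem (Finset.mem_insert_of_mem hvs) j) with h | h
      · rw [h, hf.apply_root]
        exact fun hrℓ => hf.root_notMem (hrℓ ▸ hℓs)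
      · exact hleaf _ h

theorem attach_leaf (hg : IsParentMap (s.erase ℓ) r g) (hr : r ∉ s) (hℓ : ℓ ∈ s)
    (ha : a ∈ insert r (s.erase ℓ)) : IsParentMap s r (Function.update g ℓ a) := by
  have hrℓ : r ≠ ℓ := fun h => hr (h ▸ hℓ)
  have hreach (v : V) (hv : v ∈ insert r (s.erase ℓ)) :
      ∃ k, (Function.update g ℓ a)^[k] v = r := by
    rcases Finset.mem_insert.mp hv with rfl | hv
    · exact ⟨0, rfl⟩
    obtain ⟨k, hk⟩ := hg.exists_iterate_eq_root v hv
    refine ⟨k, ?_⟩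
    rw [iterate_update_of_forall_ne (fun j hj => ?_), hk]
    have := hg.iterate_mem (Finset.mem_insert_of_mem hv) j
    rw [hj, Finset.mem_insert] at this
    exact this.elim (fun h => hrℓ h.symm) (Finset.notMem_erase ℓ s)
  refine ⟨hr, fun v hv => ?_, fun v hv => ?_⟩
  · have hvℓ : v ≠ ℓ := fun h => hv (h ▸ hℓ)
    rw [Function.update_of_ne hvℓ]
    exact hg.apply_of_notMem v fun h => hv (Finset.mem_of_mem_erase h)
  · by_cases hvℓ : v = ℓ
    · obtain ⟨k, hk⟩ := hreach a ha
      exact ⟨k + 1, by rw [Function.iterate_succ_apply, hvℓ, Function.update_self, hk]⟩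
    · exact hreach v (Finset.mem_insert_of_mem (Finset.mem_erase.mpr ⟨hvℓ, hv⟩))

/-- If no vertex of `s` were a leaf, `f` would map `s` onto itself and no orbit would reach `r`. -/
theorem leaves_nonempty (hf : IsParentMap s r f) (hs : s.Nonempty) : (leaves s f).Nonempty := by
  by_contra hempty
  have hsub : s ⊆ s.image f := by
    intro v hv
    by_contra hv'
    exact hempty ⟨v, mem_leaves.mpr ⟨hv, fun u hu hfu => hv' (hfu ▸ Finset.mem_image_of_mem f hu)⟩⟩
  have himage : s.image f = s := (Finset.eq_of_subset_of_card_le hsub Finset.card_image_le).symm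
  obtain ⟨v, hv⟩ := hs
  obtain ⟨k, hk⟩ := hf.exists_iterate_eq_root v hv
  refine hf.root_notMem (hk ▸ Set.MapsTo.iterate (fun u hu => ?_) k hv)
  rw [Finset.mem_coe, ← himage]
  exact Finset.mem_image_of_mem f hu

end IsParentMap

/-- Inverse of the Prüfer code: the first entry of the code is the parent of the leaf removed
first, which is the chosen vertex of `s` not occurring in the code. -/
def pruferDecode (r : V) : Finset V → List V → V → V
  | s, [] => fun v => if v ∈ s then r else v
  | s, a :: c =>
    let ℓ := pickOr r (s \ (a :: c).toFinset)
    Function.update (pruferDecode r (s.erase ℓ) c) ℓ a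

structure IsPruferCode (s : Finset V) (r : V) (c : List V) : Prop where
  length_eq : c.length = s.card - 1
  mem_insert : ∀ x ∈ c, x ∈ insert r s

namespace IsPruferCode

theorem pickOr_mem_sdiff (hc : IsPruferCode s r (a :: c)) :
    pickOr r (s \ (a :: c).toFinset) ∈ s \ (a :: c).toFinset := by
  have hlen := hc.length_eq
  refine pickOr_mem (Finset.sdiff_nonempty.mpr fun hsub => ?_)
  have := (Finset.card_le_card hsub).trans (a :: c).toFinset_card_le
  rw [List.length_cons] at hlen this
  omega

theorem mem_insert_erase (hc : IsPruferCode s r (a :: c)) {x : V} (hx : x ∈ a :: c) :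
    x ∈ insert r (s.erase (pickOr r (s \ (a :: c).toFinset))) := by
  have hℓ := Finset.mem_sdiff.mp hc.pickOr_mem_sdiff
  rcases Finset.mem_insert.mp (hc.mem_insert x hx) with h | h
  · rw [h]
    exact Finset.mem_insert_self r _
  · refine Finset.mem_insert_of_mem (Finset.mem_erase.mpr ⟨?_, h⟩)
    rintro rfl
    exact hℓ.2 (List.mem_toFinset.mpr hx)

theorem tail (hc : IsPruferCode s r (a :: c)) :
    IsPruferCode (s.erase (pickOr r (s \ (a :: c).toFinset))) r c := by
  refine ⟨?_, fun x hx => hc.mem_insert_erase (List.mem_cons_of_mem a hx)⟩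
  have := hc.length_eq
  rw [Finset.card_erase_of_mem (Finset.mem_sdiff.mp hc.pickOr_mem_sdiff).1,
    List.length_cons] at *
  omega

end IsPruferCode

theorem sdiff_cons_eq (hℓ : ℓ ∈ s \ (a :: c).toFinset) :
    insert ℓ ((s.erase ℓ \ c.toFinset) \ {a}) = s \ (a :: c).toFinset := by
  ext v
  simp only [Finset.mem_insert, Finset.mem_sdiff, Finset.mem_erase, List.mem_toFinset,
    List.mem_cons, Finset.mem_singleton, not_or] at hℓ ⊢
  grind

theorem isParentMap_pruferDecode (hr : r ∉ s) (hc : IsPruferCode s r c) :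
    IsParentMap s r (pruferDecode r s c) := by
  induction c generalizing s with
  | nil => exact ⟨hr, fun v hv => if_neg hv, fun v hv => ⟨1, by simp [pruferDecode, hv]⟩⟩
  | cons a c ih =>
    have hℓ := Finset.mem_sdiff.mp hc.pickOr_mem_sdiff
    exact (ih (fun h => hr (Finset.mem_of_mem_erase h)) hc.tail).attach_leaf hr hℓ.1
      (hc.mem_insert_erase List.mem_cons_self)

theorem leaves_pruferDecode (hr : r ∉ s) (hc : IsPruferCode s r c) :
    leaves s (pruferDecode r s c) = s \ c.toFinset := by
  induction c generalizing s with
  | nil =>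
    ext v
    simp only [mem_leaves, pruferDecode, List.toFinset_nil, Finset.sdiff_empty,
      and_iff_left_iff_imp]
    intro hv u hu
    rw [if_pos hu]
    exact fun h => hr (h ▸ hv)
  | cons a c ih =>
    have hℓ := hc.pickOr_mem_sdiff
    set ℓ := pickOr r (s \ (a :: c).toFinset)
    have hr' : r ∉ s.erase ℓ := fun h => hr (Finset.mem_of_mem_erase h)
    have hg := isParentMap_pruferDecode hr' hc.tail
    have hℓs := Finset.mem_sdiff.mp hℓ
    show leaves s (Function.update (pruferDecode r (s.erase ℓ) c) ℓ a) = _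
    rw [leaves_update hℓs.1 (fun h => hℓs.2 (by simp [h])) (fun u hu h => ?_), ih hr' hc.tail,
      sdiff_cons_eq hℓ]
    have := hg.apply_mem hu
    rw [h, Finset.mem_insert] at this
    exact this.elim (fun h => hr (h ▸ hℓs.1)) (Finset.notMem_erase ℓ s)

theorem eq_of_pruferDecode_eq (hr : r ∉ s) (hc : IsPruferCode s r c) (hc' : IsPruferCode s r c')
    (h : pruferDecode r s c = pruferDecode r s c') : c = c' := by
  induction c generalizing s c' with
  | nil =>
    have := hc'.length_eq
    rw [← hc.length_eq, List.length_nil, List.length_eq_zero_iff] at this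
    exact this.symm
  | cons a c ih =>
    cases c' with
    | nil =>
      have := hc.length_eq
      rw [← hc'.length_eq] at this
      simp at this
    | cons a' c' =>
      have hL : s \ (a :: c).toFinset = s \ (a' :: c').toFinset := by
        rw [← leaves_pruferDecode hr hc, h, leaves_pruferDecode hr hc']
      have hc'' := hc'.tail
      change Function.update (pruferDecode r (s.erase (pickOr r (s \ (a :: c).toFinset))) c)
          (pickOr r (s \ (a :: c).toFinset)) a =
        Function.update (pruferDecode r (s.erase (pickOr r (s \ (a' :: c').toFinset))) c')
          (pickOr r (s \ (a' :: c').toFinset)) a' at h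
      rw [← hL] at h hc''
      set ℓ := pickOr r (s \ (a :: c).toFinset)
      have hr' : r ∉ s.erase ℓ := fun h => hr (Finset.mem_of_mem_erase h)
      have ha : a = a' := by simpa using congrFun h ℓ
      subst ha
      have hreset (d : List V) (hd : IsPruferCode (s.erase ℓ) r d) :
          Function.update (Function.update (pruferDecode r (s.erase ℓ) d) ℓ a) ℓ ℓ =
            pruferDecode r (s.erase ℓ) d := by
        rw [Function.update_idem, Function.update_eq_self_iff,
          (isParentMap_pruferDecode hr' hd).apply_of_notMem ℓ (Finset.notMem_erase ℓ s)]
      rw [ih hr' hc.tail hc'' (by rw [← hreset c hc.tail, h, hreset c' hc''])]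

theorem IsParentMap.pruferDecode_nil (hf : IsParentMap s r f) (hs : s.card ≤ 1) :
    pruferDecode r s [] = f := by
  funext v
  change (if v ∈ s then r else v) = f v
  by_cases hv : v ∈ s
  · rw [if_pos hv]
    rcases Finset.mem_insert.mp (hf.apply_mem hv) with h | h
    · exact h.symm
    · exact absurd (Finset.card_le_one.mp hs _ h _ hv) (hf.apply_ne hv)
  · rw [if_neg hv, hf.apply_of_notMem v hv]

theorem IsParentMap.exists_pruferDecode_eq (hf : IsParentMap s r f) :
    ∃ c, IsPruferCode s r c ∧ pruferDecode r s c = f := by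
  induction hn : s.card using Nat.strong_induction_on generalizing s f with | _ n ih => ?_
  by_cases hs : n ≤ 1
  · exact ⟨[], ⟨by simp; omega, by simp⟩, hf.pruferDecode_nil (hn ▸ hs)⟩
  have hℓ := pickOr_mem (r := r) (hf.leaves_nonempty (Finset.card_pos.mp (by omega)))
  set ℓ := pickOr r (leaves s f)
  obtain ⟨hℓs, hleaf⟩ := mem_leaves.mp hℓ
  have hf' := hf.erase_leaf hℓ
  obtain ⟨c, hc, hdec⟩ :=
    ih (n - 1) (by omega) hf' (by rw [Finset.card_erase_of_mem hℓs, hn])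
  have hℓc : ℓ ∉ c := fun h => by
    have := hc.mem_insert ℓ h
    rw [Finset.mem_insert, Finset.mem_erase] at this
    exact this.elim (fun h => hf.root_notMem (h ▸ hℓs)) fun h => h.1 rfl
  have hfℓ := hf.apply_ne hℓs
  have hℓcode : ℓ ∈ s \ (f ℓ :: c).toFinset := by simp [hℓs, Ne.symm hfℓ, hℓc]
  have hL : s \ (f ℓ :: c).toFinset = leaves s f := by
    have := leaves_update (g := Function.update f ℓ ℓ) hℓs hfℓ fun u hu => by
      rw [Function.update_of_ne (Finset.ne_of_mem_erase hu)]
      exact hleaf u (Finset.mem_of_mem_erase hu)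
    rw [Function.update_idem, Function.update_eq_self, ← hdec,
      leaves_pruferDecode hf'.root_notMem hc, sdiff_cons_eq hℓcode] at this
    exact this.symm
  refine ⟨f ℓ :: c, ⟨?_, fun x hx => ?_⟩, ?_⟩
  · have := hc.length_eq
    rw [Finset.card_erase_of_mem hℓs] at this
    rw [List.length_cons, this, hn]
    omega
  · rcases List.mem_cons.mp hx with rfl | hx
    · exact hf.apply_mem hℓs
    · exact Finset.insert_subset_insert _ (Finset.erase_subset _ _) (hc.mem_insert x hx)
  · change Function.update (pruferDecode r (s.erase (pickOr r (s \ (f ℓ :: c).toFinset))) c)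
      (pickOr r (s \ (f ℓ :: c).toFinset)) (f ℓ) = f
    rw [hL, hdec, Function.update_idem, Function.update_eq_self]

theorem card_isParentMap (hr : r ∉ s) :
    Nat.card {f // IsParentMap s r f} = Nat.card {c // IsPruferCode s r c} :=
  (Nat.card_eq_of_bijective (fun c => ⟨pruferDecode r s c.1, isParentMap_pruferDecode hr c.2⟩)
    ⟨fun c c' h => Subtype.ext (eq_of_pruferDecode_eq hr c.2 c'.2 (congrArg Subtype.val h)),
      fun f => by
        obtain ⟨c, hc, hdec⟩ := f.2.exists_pruferDecode_eq
        exact ⟨⟨c, hc⟩, Subtype.ext hdec⟩⟩).symm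

end ParentMap

section Trees

open SimpleGraph

variable {V : Type*} {s : Finset V} {T : SimpleGraph V} {r v w : V} {f : V → V}

def funGraph (f : V → V) : SimpleGraph V :=
  SimpleGraph.fromRel fun v w => f v = w

theorem funGraph_adj : (funGraph f).Adj v w ↔ v ≠ w ∧ (f v = w ∨ f w = v) :=
  fromRel_adj _ v w

theorem reachable_iterate_funGraph (k : ℕ) : (funGraph f).Reachable v (f^[k] v) := by
  induction k with
  | zero => rfl
  | succ k ih =>
    rw [Function.iterate_succ_apply']
    refine ih.trans ?_
    by_cases h : f^[k] v = f (f^[k] v)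
    · rw [← h]
    · exact (funGraph_adj.mpr ⟨h, Or.inl rfl⟩).reachable

theorem IsParentMap.edgeSet_funGraph (hf : IsParentMap s r f) :
    (funGraph f).edgeSet = (fun v => s(v, f v)) '' s := by
  ext e
  induction e with | h x y => ?_
  rw [mem_edgeSet, funGraph_adj]
  constructor
  · rintro ⟨hxy, rfl | rfl⟩
    · exact ⟨x, by_contra fun hx => hxy (hf.apply_of_notMem x hx).symm, rfl⟩
    · exact ⟨y, by_contra fun hy => hxy (hf.apply_of_notMem y hy), Sym2.eq_swap⟩
  · rintro ⟨u, hu, huxy⟩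
    rcases Sym2.eq_iff.mp huxy with ⟨rfl, rfl⟩ | ⟨rfl, rfl⟩
    · exact ⟨(hf.apply_ne hu).symm, Or.inl rfl⟩
    · exact ⟨hf.apply_ne hu, Or.inr rfl⟩

theorem IsParentMap.card_edgeSet_funGraph (hf : IsParentMap s r f) :
    Nat.card (funGraph f).edgeSet = s.card := by
  rw [Nat.card_coe_set_eq, hf.edgeSet_funGraph, Set.InjOn.ncard_image, Set.ncard_coe_finset]
  intro u hu v hv huv
  rcases Sym2.eq_iff.mp huv with ⟨h, -⟩ | ⟨rfl, hvu⟩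
  · exact h
  · exact absurd hvu (hf.apply_apply_ne hv)

def treeParent (T : SimpleGraph V) (r v : V) : V :=
  if h : ∃ w, T.Adj v w ∧ T.dist w r < T.dist v r then h.choose else v

theorem treeParent_spec (h : ∃ w, T.Adj v w ∧ T.dist w r < T.dist v r) :
    T.Adj v (treeParent T r v) ∧ T.dist (treeParent T r v) r < T.dist v r := by
  rw [treeParent, dif_pos h]
  exact h.choose_spec

theorem treeParent_root : treeParent T r r = r :=
  dif_neg fun ⟨_, _, h⟩ => Nat.not_lt_zero _ (SimpleGraph.dist_self (G := T) ▸ h)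

theorem adj_treeParent (h : treeParent T r v ≠ v) : T.Adj v (treeParent T r v) := by
  by_cases hex : ∃ w, T.Adj v w ∧ T.dist w r < T.dist v r
  · exact (treeParent_spec hex).1
  · exact absurd (dif_neg hex) h

theorem funGraph_treeParent_le : funGraph (treeParent T r) ≤ T := by
  intro v w hvw
  rcases funGraph_adj.mp hvw with ⟨hne, rfl | rfl⟩
  · exact adj_treeParent (Ne.symm hne)
  · exact (adj_treeParent hne).symm

variable [Fintype V] [DecidableEq V]

theorem IsParentMap.isTree_funGraph (hf : IsParentMap (Finset.univ.erase r) r f) :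
    (funGraph f).IsTree := by
  have hreach (v : V) : (funGraph f).Reachable v r := by
    by_cases hv : v = r
    · rw [hv]
    · obtain ⟨k, hk⟩ := hf.exists_iterate_eq_root v (Finset.mem_erase.mpr ⟨hv, Finset.mem_univ v⟩)
      exact hk ▸ reachable_iterate_funGraph k
  have : Nonempty V := ⟨r⟩
  refine isTree_iff_connected_and_card.mpr ⟨⟨fun u v => (hreach u).trans (hreach v).symm⟩, ?_⟩
  rw [hf.card_edgeSet_funGraph, Finset.card_erase_of_mem (Finset.mem_univ r), Finset.card_univ,
    Nat.card_eq_fintype_card]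
  have := Fintype.card_pos (α := V)
  omega

theorem IsParentMap.dist_apply (hf : IsParentMap (Finset.univ.erase r) r f) (hv : v ≠ r) :
    (funGraph f).dist (f v) r + 1 = (funGraph f).dist v r := by
  have hT := hf.isTree_funGraph
  set T := funGraph f
  induction hn : T.dist v r using Nat.strong_induction_on generalizing v with | _ n ih => ?_
  have hadj : T.Adj v (f v) := funGraph_adj.mpr ⟨(hf.apply_ne (by simpa using hv)).symm, Or.inl rfl⟩
  rcases hT.dist_eq_dist_add_one_of_adj r hadj with h | h
  · rw [SimpleGraph.dist_comm, ← h, SimpleGraph.dist_comm, hn]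
  -- Otherwise the next vertex `w` on a shortest path from `v` to `r` is a child of `v`,
  -- which the induction hypothesis places farther from `r` than `v`.
  obtain ⟨w, hvw, hw⟩ := hT.connected.exists_adj_dist_add_one hv
  have hfw : f w = v := by
    refine (funGraph_adj.mp hvw).2.resolve_left fun hfv => ?_
    rw [SimpleGraph.dist_comm (u := r), SimpleGraph.dist_comm (u := r), hfv] at h
    omega
  have hwr : w ≠ r := fun hwr => hv (by rw [← hfw, hwr, hf.apply_root])
  have := ih (T.dist w r) (by omega) hwr rfl
  rw [hfw] at this
  omega

theorem SimpleGraph.Connected.isParentMap_treeParent (hT : T.Connected) :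
    IsParentMap (Finset.univ.erase r) r (treeParent T r) := by
  have hreach (v : V) : ∃ k, (treeParent T r)^[k] v = r := by
    induction hn : T.dist v r using Nat.strong_induction_on generalizing v with | _ n ih => ?_
    by_cases hv : v = r
    · exact ⟨0, hv⟩
    obtain ⟨w, hvw, hw⟩ := hT.exists_adj_dist_add_one hv
    have hspec := (treeParent_spec (r := r) ⟨w, hvw, by omega⟩).2
    obtain ⟨k, hk⟩ := ih _ (hn ▸ hspec) _ rfl
    exact ⟨k + 1, hk⟩
  refine ⟨by simp, fun v hv => ?_, fun v _ => hreach v⟩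
  rw [show v = r by simpa using hv, treeParent_root]

theorem SimpleGraph.IsTree.funGraph_treeParent (hT : T.IsTree) : funGraph (treeParent T r) = T :=
  have : Nonempty V := hT.connected.nonempty
  (maximal_isAcyclic_iff_isTree.mpr hT.connected.isParentMap_treeParent.isTree_funGraph).eq_of_le
    hT.isAcyclic funGraph_treeParent_le

theorem IsParentMap.treeParent_funGraph (hf : IsParentMap (Finset.univ.erase r) r f) :
    treeParent (funGraph f) r = f := by
  funext v
  by_cases hv : v = r
  · rw [hv, treeParent_root, hf.apply_root]
  have hadj : (funGraph f).Adj v (f v) :=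
    funGraph_adj.mpr ⟨(hf.apply_ne (by simpa using hv)).symm, Or.inl rfl⟩
  obtain ⟨hp, hpdist⟩ := treeParent_spec ⟨f v, hadj, by rw [← hf.dist_apply hv]; omega⟩
  refine ((funGraph_adj.mp hp).2.resolve_right fun hfp => ?_).symm
  have hpr : treeParent (funGraph f) r v ≠ r := fun h => hv (by rw [← hfp, h, hf.apply_root])
  have := hf.dist_apply hpr
  rw [hfp] at this
  omega

def parentMapEquivIsTree (r : V) :
    {f // IsParentMap (Finset.univ.erase r) r f} ≃ {T : SimpleGraph V // T.IsTree} where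
  toFun f := ⟨funGraph f, f.2.isTree_funGraph⟩
  invFun T := ⟨treeParent T r, T.2.connected.isParentMap_treeParent⟩
  left_inv f := Subtype.ext f.2.treeParent_funGraph
  right_inv T := Subtype.ext T.2.funGraph_treeParent

end Trees

theorem SimpleGraph.card_isTree {V : Type*} [Fintype V] [Nonempty V] :
    Nat.card {T : SimpleGraph V // T.IsTree} = Fintype.card V ^ (Fintype.card V - 2) := by
  classical
  obtain ⟨r⟩ := ‹Nonempty V›
  have hcard : (Finset.univ.erase r).card - 1 = Fintype.card V - 2 := by
    rw [Finset.card_erase_of_mem (Finset.mem_univ r), Finset.card_univ, Nat.sub_sub]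
  have hcode (c : List V) :
      IsPruferCode (Finset.univ.erase r) r c ↔ c.length = Fintype.card V - 2 :=
    ⟨fun hc => hcard ▸ hc.length_eq, fun hc => ⟨hcard ▸ hc, fun x _ => by simp⟩⟩
  rw [← Nat.card_congr (parentMapEquivIsTree r), card_isParentMap (by simp),
    Nat.card_congr (Equiv.subtypeEquivRight hcode)]
  exact (Nat.card_eq_fintype_card (α := List.Vector V _)).trans (card_vector _)

theorem SimpleGraph.card_connected_ncard_edgeSet_eq {V : Type*} [Fintype V] [Nonempty V] :
    Nat.card {G : SimpleGraph V // G.Connected ∧ G.edgeSet.ncard = Fintype.card V - 1} =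
      Fintype.card V ^ (Fintype.card V - 2) := by
  rw [← SimpleGraph.card_isTree]
  refine Nat.card_congr (Equiv.subtypeEquivRight fun G => ?_)
  rw [SimpleGraph.isTree_iff_connected_and_card, Nat.card_coe_set_eq, Nat.card_eq_fintype_card]
  have := Fintype.card_pos (α := V)
  exact and_congr_right fun _ => by omega

theorem forestCount_eq_card {s n : ℕ} (hs : s ≤ n) :
    forestCount s n =
      Nat.card {g : SimpleGraph (Fin n) // numComp g = s ∧ g.edgeSet.ncard = n - s} := by
  refine Nat.card_congr (Equiv.subtypeEquivRight fun g => ?_)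
  rw [SimpleGraph.isAcyclic_iff_card_edgeSet_add_card_connectedComponent, Nat.card_coe_set_eq,
    Nat.card_eq_fintype_card (α := Fin n), Fintype.card_fin]
  change _ + numComp g = n ∧ _ ↔ _
  constructor <;> rintro ⟨h₁, h₂⟩ <;> exact ⟨by omega, by omega⟩

theorem probEvent_numComp_sub_isBigO {s n : ℕ} (hs : s ≤ n) :
    (fun p : ℝ => probEvent n p (fun g => numComp g = s) - (forestCount s n : ℝ) * p ^ (n - s))
      =O[𝓝 0] fun p : ℝ => p ^ (n - s + 1) := by
  have hk (g : SimpleGraph (Fin n)) (hg : numComp g = s) : n - s ≤ g.edgeSet.ncard := by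
    have := g.card_le_card_edgeSet_add_card_connectedComponent
    rw [Nat.card_coe_set_eq, Nat.card_eq_fintype_card, Fintype.card_fin] at this
    unfold numComp at hg
    omega
  rw [forestCount_eq_card hs]
  exact probEvent_sub_isBigO _ _ hk

theorem connProb_sub_isBigO {n : ℕ} (hn : 0 < n) :
    (fun p : ℝ => connProb n p - (n : ℝ) ^ (n - 2) * p ^ (n - 1)) =O[𝓝 0] fun p : ℝ => p ^ n := by
  have : Nonempty (Fin n) := ⟨⟨0, hn⟩⟩
  have hk (g : SimpleGraph (Fin n)) (hg : g.Connected) : n - 1 ≤ g.edgeSet.ncard := by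
    have := hg.card_vert_le_card_edgeSet_add_one
    rw [Nat.card_coe_set_eq, Nat.card_eq_fintype_card, Fintype.card_fin] at this
    omega
  have hcount := SimpleGraph.card_connected_ncard_edgeSet_eq (V := Fin n)
  rw [Fintype.card_fin] at hcount
  have key := probEvent_sub_isBigO _ _ hk
  rwa [hcount, Nat.sub_add_cancel hn, Nat.cast_pow] at key

theorem connProb_zero (p : ℝ) : connProb 0 p = 0 := by
  unfold connProb probEvent
  exact Finset.sum_eq_zero fun g _ => if_neg fun hg => hg.nonempty.elim Fin.elim0

theorem probEvent_smallP (n s : ℕ) (hs : s ≤ n) :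
    ((fun p : ℝ => probEvent n p (fun g => numComp g = s) -
        (forestCount s n : ℝ) * p ^ (n - s)) =O[𝓝[>] (0 : ℝ)]
      fun p : ℝ => p ^ (n - s + 1)) ∧
    ((fun p : ℝ => connProb n p - (n : ℝ) ^ (n - 2) * p ^ (n - 1)) =O[𝓝[>] (0 : ℝ)]
      fun p : ℝ => p ^ n) := by
  refine ⟨(probEvent_numComp_sub_isBigO hs).mono nhdsWithin_le_nhds, ?_⟩
  rcases Nat.eq_zero_or_pos n with rfl | hn
  · have hconst : (fun p : ℝ => connProb 0 p - ((0 : ℕ) : ℝ) ^ (0 - 2) * p ^ (0 - 1)) =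
        fun _ => -1 := by
      funext p
      simp [connProb_zero]
    simp only [hconst, pow_zero]
    exact isBigO_const_const _ one_ne_zero _
  · exact (connProb_sub_isBigO hn).mono nhdsWithin_le_nhds
end
end
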